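/- arXiv:2404.01139 — 2 statements merged into one kernel-verified Lean document; each statement's English description precedes it below -/
import Mathlib

section
/- Let f, k, D be positive natural numbers, let b : Fin (f*f) → Matrix (Fin f) (Fin f) ℝ be a linearly independent family of filters, let g : Fin D → Fin (f*f), set h i = b (g i), and let A : Fin k → Fin D → ℝ. Then the linear map from (Fin D → ℝ) to (Fin k → Matrix (Fin f) (Fin f) ℝ) sending w to (fun j => ∑_{i : Fin D} (w i * A j i) • h i) is surjective if and only if for every s : Fin (f*f), the family of vectors (fun j => A j i) for i ∈ {i | g i = s} spans Fin k → ℝ. -/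
/-!
Expanding every effective filter in the basis `b`, the `j`-th filter produced by `w` has
coordinate `∑_{g i = s} w i * A j i` on `b s`. Reading the family of `k` filters through these
coordinates, i.e. as an element of `(Fin (f * f) → ℝᵏ)`, the map `w ↦ …` becomes the linear
combination of the vectors `Pi.single (g i) (A · i)`. Their span is the product over `s` of the
spans of the columns `A · i` with `g i = s`, and a product of submodules is everything iff each
factor is.
-/

open Submodule

namespace Submodule

variable {R σ ι V : Type*} [Semiring R] [AddCommMonoid V] [Module R V]

theorem pi_univ_eq_top_iff {φ : σ → Type*} [∀ s, AddCommMonoid (φ s)] [∀ s, Module R (φ s)]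
    {p : ∀ s, Submodule R (φ s)} :
    pi Set.univ p = ⊤ ↔ ∀ s, p s = ⊤ := by
  classical
  refine ⟨fun h s => eq_top_iff.2 fun x _ => ?_,
    fun h => by rw [show p = fun _ => ⊤ from funext h, pi_top]⟩
  have hx : Pi.single s x ∈ pi Set.univ p := h ▸ mem_top
  simpa using hx s trivial

theorem span_range_single_eq_pi [DecidableEq σ] [Finite σ] (g : ι → σ) (a : ι → V) :
    span R (Set.range fun i => (Pi.single (g i) (a i) : σ → V)) =
      pi Set.univ fun s => span R (Set.range fun i : {i // g i = s} => a i) := by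
  apply le_antisymm
  · rw [span_le]
    rintro _ ⟨i, rfl⟩ s -
    rcases eq_or_ne s (g i) with rfl | hs
    · simp only [Pi.single_eq_same, SetLike.mem_coe]
      exact subset_span ⟨⟨i, rfl⟩, rfl⟩
    · simp [Pi.single_eq_of_ne hs]
  · rw [← iSup_map_single, iSup_le_iff]
    intro s
    rw [map_span, span_le]
    rintro _ ⟨_, ⟨⟨i, rfl⟩, rfl⟩, rfl⟩
    exact subset_span ⟨i, rfl⟩

end Submodule

def LinearEquiv.piComm (R : Type*) {α β : Type*} (φ : α → β → Type*) [Semiring R]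
    [∀ a b, AddCommMonoid (φ a b)] [∀ a b, Module R (φ a b)] :
    (∀ a b, φ a b) ≃ₗ[R] ∀ b a, φ a b :=
  { Equiv.piComm φ with
    map_add' := fun _ _ => rfl
    map_smul' := fun _ _ => rfl }

variable {R M ι κ σ : Type*} [CommSemiring R] [AddCommMonoid M] [Module R M]

theorem surjective_sum_mul_smul_basis_iff [Fintype ι] [Finite σ]
    (B : Module.Basis σ R M) (g : ι → σ) (A : κ → ι → R) :
    Function.Surjective (fun w : ι → R => fun j => ∑ i, (w i * A j i) • B (g i)) ↔
      ∀ s, span R (Set.range fun i : {i // g i = s} => fun j => A j i.1) = ⊤ := by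
  classical
  let E : (κ → M) ≃ₗ[R] σ → κ → R :=
    (LinearEquiv.piCongrRight fun _ => B.equivFun).trans (LinearEquiv.piComm R _)
  have hE : ∀ i, E (fun j => A j i • B (g i)) = Pi.single (g i) fun j => A j i := by
    intro i
    ext s j
    rcases eq_or_ne s (g i) with rfl | hs
    · simp [E, LinearEquiv.piComm, Function.swap]
    · simp [E, LinearEquiv.piComm, Function.swap, Pi.single_eq_of_ne hs,
        Finsupp.single_eq_of_ne hs]
  have hΦ : (fun w : ι → R => fun j => ∑ i, (w i * A j i) • B (g i)) =
      Fintype.linearCombination R fun i j => A j i • B (g i) := by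
    ext w j
    simp [Fintype.linearCombination_apply, Finset.sum_apply, mul_smul]
  rw [hΦ, ← span_range_eq_top_iff_surjective_fintypeLinearCombination,
    ← Submodule.map_eq_top_iff (e := E), map_span, ← Set.range_comp]
  simp only [Function.comp_def, LinearEquiv.coe_coe, hE, span_range_single_eq_pi,
    pi_univ_eq_top_iff]

theorem structured_init_stmt3_general
    (f k D : ℕ)
    (b : Fin (f * f) → Matrix (Fin f) (Fin f) ℝ)
    (hb : LinearIndependent ℝ b)
    (g : Fin D → Fin (f * f))
    (h : Fin D → Matrix (Fin f) (Fin f) ℝ)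
    (hh : ∀ i : Fin D, h i = b (g i))
    (A : Fin k → Fin D → ℝ) :
    Function.Surjective
        (fun w : Fin D → ℝ =>
          fun j : Fin k => ∑ i : Fin D, (w i * A j i) • h i)
      ↔ ∀ s : Fin (f * f),
          Submodule.span ℝ
            (Set.range fun i : {i : Fin D // g i = s} => fun j : Fin k => A j i.1) = ⊤ := by
  have hcard : Fintype.card (Fin (f * f)) = Module.finrank ℝ (Matrix (Fin f) (Fin f) ℝ) := by
    simp [Module.finrank_matrix]
  simp only [hh]
  simpa using surjective_sum_mul_smul_basis_iff
    (basisOfLinearIndependentOfCardEqFinrank' b hb hcard) g A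

/-- Exact characterization underlying Proposition 1: with spatial filters
`h i = b (g i)` that are copies of `f²` linearly independent basis filters `b`, the map
`w ↦ (fun j => ∑ i, (w i * A j i) • h i)` is surjective iff for every basis filter `s`,
the columns of `A` indexed by the copies of `s` span `ℝᵏ`. -/
theorem structured_init_stmt3
    (f k D : ℕ) (hf : 0 < f) (hk : 0 < k) (hD : 0 < D)
    (b : Fin (f * f) → Matrix (Fin f) (Fin f) ℝ)
    (hb : LinearIndependent ℝ b)
    (g : Fin D → Fin (f * f))
    (h : Fin D → Matrix (Fin f) (Fin f) ℝ)
    (hh : ∀ i : Fin D, h i = b (g i))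
    (A : Fin k → Fin D → ℝ) :
    Function.Surjective
        (fun w : Fin D → ℝ =>
          fun j : Fin k => ∑ i : Fin D, (w i * A j i) • h i)
      ↔ ∀ s : Fin (f * f),
          Submodule.span ℝ
            (Set.range fun i : {i : Fin D // g i = s} => fun j : Fin k => A j i.1) = ⊤ :=
  structured_init_stmt3_general f k D b hb g h hh A
end

section
/- Fix e, m, n natural numbers with m, n ≥ 1, and let (u₀,v₀) : Fin (e+1) × Fin (e+1). Define the matrix T indexed by output pixels Fin m × Fin n (rows) and input pixels Fin (m+e) × Fin (n+e) (columns) by T((p,q),(p',q')) = 1 if (p',q') = (p+u₀, q+v₀) and 0 otherwise. Then: (i) for every image x : Fin (m+e) × Fin (n+e) → ℝ, the matrix–vector product T.mulVec x equals the valid cross-correlation δ₍u₀,v₀₎ ⋆ x, where (h ⋆ x)(p,q) = ∑_{u=0}^{e} ∑_{v=0}^{e} h(u,v) · x(p+u, q+v) and δ₍u₀,v₀₎ is the impulse filter with value 1 at (u₀,v₀) and 0 elsewhere; and (ii) every row of T contains exactly one nonzero entry, and that entry equals 1. -/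
/-- Valid cross-correlation of a `(e+1) × (e+1)` filter `h` with an
`(m+e) × (n+e)` image `x`, producing an `m × n` output:
`(h ⋆ x)(p,q) = ∑_{u,v} h(u,v) * x(p+u, q+v)`. -/
noncomputable def crossCorr (e m n : ℕ) (h : Fin (e + 1) × Fin (e + 1) → ℝ)
    (x : Fin (m + e) × Fin (n + e) → ℝ) : Fin m × Fin n → ℝ :=
  fun pq => ∑ u : Fin (e + 1), ∑ v : Fin (e + 1),
    h (u, v) *
      x (⟨pq.1.1 + u.1, by have := pq.1.isLt; have := u.isLt; omega⟩,
         ⟨pq.2.1 + v.1, by have := pq.2.isLt; have := v.isLt; omega⟩)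

/-- The convolutional matrix `T` of an impulse filter: `T` maps vectorized
images to the impulse cross-correlation output, and each row of `T` has exactly one nonzero
entry, which equals `1`. -/
theorem structured_init_stmt6
    (e m n : ℕ) (hm : 1 ≤ m) (hn : 1 ≤ n)
    (u₀ v₀ : Fin (e + 1))
    (T : Matrix (Fin m × Fin n) (Fin (m + e) × Fin (n + e)) ℝ)
    (hT : ∀ (p : Fin m) (q : Fin n) (p' : Fin (m + e)) (q' : Fin (n + e)),
      T (p, q) (p', q') =
        if (p', q') =
            ((⟨p.1 + u₀.1, by have := p.isLt; have := u₀.isLt; omega⟩ : Fin (m + e)),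
             (⟨q.1 + v₀.1, by have := q.isLt; have := v₀.isLt; omega⟩ : Fin (n + e)))
          then (1 : ℝ) else 0) :
    (∀ x : Fin (m + e) × Fin (n + e) → ℝ,
        T.mulVec x =
          crossCorr e m n
            (fun uv : Fin (e + 1) × Fin (e + 1) => if uv = (u₀, v₀) then (1 : ℝ) else 0)
            x) ∧
      (∀ r : Fin m × Fin n,
        (∃! c : Fin (m + e) × Fin (n + e), T r c ≠ 0) ∧
          ∀ c : Fin (m + e) × Fin (n + e), T r c ≠ 0 → T r c = 1) := by
  constructor
  · intro x
    funext pq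
    obtain ⟨p, q⟩ := pq
    have h1 : T.mulVec x (p, q) = ∑ c : Fin (m + e) × Fin (n + e), T (p, q) c * x c := rfl
    rw [h1]
    have h2 : ∀ c : Fin (m + e) × Fin (n + e), T (p, q) c =
        if c = ((⟨p.1 + u₀.1, by omega⟩ : Fin (m + e)),
                (⟨q.1 + v₀.1, by omega⟩ : Fin (n + e))) then (1 : ℝ) else 0 := by
      rintro ⟨p', q'⟩; exact hT p q p' q'
    simp only [h2, crossCorr, Prod.mk.injEq, ite_mul, one_mul, zero_mul,
      Finset.sum_ite_eq, Finset.mem_univ, if_true, ite_and]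
    rw [Finset.sum_eq_single u₀, Finset.sum_eq_single v₀]
    · simp
    · intro b _ hb; simp [hb]
    · simp
    · intro b _ hb
      rw [Finset.sum_eq_zero]
      intro v _
      simp [hb]
    · simp
  · rintro ⟨p, q⟩
    set c₀ : Fin (m + e) × Fin (n + e) :=
      ((⟨p.1 + u₀.1, by omega⟩ : Fin (m + e)), (⟨q.1 + v₀.1, by omega⟩ : Fin (n + e)))
    have h2 : ∀ c : Fin (m + e) × Fin (n + e), T (p, q) c =
        if c = c₀ then (1 : ℝ) else 0 := by
      rintro ⟨p', q'⟩; exact hT p q p' q'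
    constructor
    · refine ⟨c₀, by simp [h2], ?_⟩
      intro c hc
      by_contra hne
      exact hc (by simp [h2, hne])
    · intro c hc
      rcases eq_or_ne c c₀ with h | h
      · simp [h2, h]
      · exact absurd (by simp [h2, h]) hc
end
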